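/- Let n ≥ 3 be an odd integer and let U be a nonempty bounded open subset of ℝⁿ. Then there exists a compactly supported smooth function f : ℝⁿ → ℝ that is not identically zero, such that f vanishes on U, and for every hyperplane ξ = {x ∈ ℝⁿ : ⟨x, θ⟩ = s} (θ a unit vector, s ∈ ℝ) with ξ ∩ U ≠ ∅, the integral of f over ξ with respect to the (n−1)-dimensional Hausdorff measure equals 0. -/

import Mathlib

/-!
Write `n = 2m + 3`, put `U` inside the ball of radius `R` about `0`, and let `ψ` be a bump
function supported in `(R², ∞)`. The candidate is `f x = ψ⁽ᵐ⁺¹⁾(‖x‖²)`. A hyperplane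
`⟪x, θ⟫ = s` meeting `U` has `s² ≤ R²`; parametrising it isometrically by `ℝ²ᵐ⁺²` and passing
to polar coordinates turns the integral of `f` over it into a multiple of
`∫₀^∞ r²ᵐ⁺¹ ψ⁽ᵐ⁺¹⁾(s² + r²) dr`. Each integration by parts lowers the power of `r` by two and
the order of the derivative by one, and the boundary terms vanish because `ψ` is flat near
`s²`, so this integral is `0`. Finally `f ≠ 0` because no derivative of a nonzero compactly
supported function vanishes identically.
-/

open MeasureTheory Set Function Filter RealInnerProductSpace
open scoped ContDiff

section IteratedDeriv

variable {F : Type*} [NormedAddCommGroup F] [NormedSpace ℝ F]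

theorem tsupport_iteratedDeriv_subset (f : ℝ → F) :
    ∀ k, tsupport (iteratedDeriv k f) ⊆ tsupport f
  | 0 => by rw [iteratedDeriv_zero]
  | k + 1 => by
    rw [iteratedDeriv_succ]
    exact tsupport_deriv_subset.trans (tsupport_iteratedDeriv_subset f k)

theorem HasCompactSupport.iteratedDeriv {f : ℝ → F} (hf : HasCompactSupport f) (k : ℕ) :
    HasCompactSupport (iteratedDeriv k f) :=
  hf.mono' ((subset_tsupport _).trans (tsupport_iteratedDeriv_subset f k))

theorem ContDiff.iteratedDeriv {f : ℝ → F} (hf : ContDiff ℝ ∞ f) (k : ℕ) :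
    ContDiff ℝ ∞ (iteratedDeriv k f) :=
  iteratedDeriv_eq_iterate (f := f) ▸ hf.iterate_deriv k

theorem HasCompactSupport.eq_zero_of_deriv_eq_zero {f : ℝ → F} (hcs : HasCompactSupport f)
    (hf : Differentiable ℝ f) (hf' : deriv f = 0) : f = 0 := by
  obtain ⟨x, hx⟩ := (ne_univ_iff_exists_notMem _).1 hcs.isCompact.ne_univ
  funext y
  rw [is_const_of_deriv_eq_zero hf (congrFun hf') y x, image_eq_zero_of_notMem_tsupport hx]
  rfl

theorem iteratedDeriv_ne_zero_of_hasCompactSupport {f : ℝ → F} (hcs : HasCompactSupport f)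
    (hf : ContDiff ℝ ∞ f) (hne : f ≠ 0) : ∀ k, iteratedDeriv k f ≠ 0
  | 0 => by rwa [iteratedDeriv_zero]
  | k + 1 => by
    rw [iteratedDeriv_succ]
    exact fun h ↦ iteratedDeriv_ne_zero_of_hasCompactSupport hcs hf hne k <|
      (hcs.iteratedDeriv k).eq_zero_of_deriv_eq_zero
        (hf.differentiable_iteratedDeriv k (mod_cast ENat.natCast_lt_top k)) h

end IteratedDeriv

theorem HasCompactSupport.comp_isProperMap {X Y M : Type*} [TopologicalSpace X] [R1Space X]
    [TopologicalSpace Y] [Zero M] {g : Y → M} (hg : HasCompactSupport g) {f : X → Y}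
    (hf : IsProperMap f) : HasCompactSupport (g ∘ f) :=
  .of_support_subset_isCompact (hf.isCompact_preimage hg.isCompact)
    fun _ hx ↦ subset_tsupport g hx

theorem isProperMap_norm_sq {E : Type*} [NormedAddCommGroup E] [ProperSpace E] :
    IsProperMap fun x : E ↦ ‖x‖ ^ 2 :=
  isProperMap_iff_tendsto_cocompact.2 ⟨by fun_prop,
    ((tendsto_pow_atTop two_ne_zero).comp tendsto_norm_cocompact_atTop).mono_right
      atTop_le_cocompact⟩

theorem isProperMap_const_add_sq (b : ℝ) : IsProperMap fun r : ℝ ↦ b + r ^ 2 := by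
  simpa [Function.comp_def] using
    (Homeomorph.addLeft b).isProperMap.comp (isProperMap_norm_sq (E := ℝ))

theorem hasCompactSupport_pow_mul_comp_const_add_sq {g : ℝ → ℝ} (hg : HasCompactSupport g)
    (b : ℝ) (p : ℕ) : HasCompactSupport fun r : ℝ ↦ r ^ p * g (b + r ^ 2) :=
  (hg.comp_isProperMap (isProperMap_const_add_sq b)).mul_left

theorem integrable_pow_mul_comp_const_add_sq {g : ℝ → ℝ} (hg : Continuous g)
    (hcs : HasCompactSupport g) (b : ℝ) (p : ℕ) :
    Integrable fun r : ℝ ↦ r ^ p * g (b + r ^ 2) :=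
  (by fun_prop : Continuous _).integrable_of_hasCompactSupport
    (hasCompactSupport_pow_mul_comp_const_add_sq hcs b p)

theorem integral_Ioi_pow_mul_comp_const_add_sq {g : ℝ → ℝ} (hg : ContDiff ℝ 1 g)
    (hcs : HasCompactSupport g) {b : ℝ} (hb : g b = 0) (p : ℕ) :
    p * (∫ r in Ioi 0, r ^ (p - 1) * g (b + r ^ 2))
      + 2 * ∫ r in Ioi 0, r ^ (p + 1) * deriv g (b + r ^ 2) = 0 := by
  set G : ℝ → ℝ := fun r ↦ r ^ p * g (b + r ^ 2)
  have hG : ∀ r, HasDerivAt G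
      (p * (r ^ (p - 1) * g (b + r ^ 2)) + 2 * (r ^ (p + 1) * deriv g (b + r ^ 2))) r := by
    intro r
    have hg' := (hg.differentiable one_ne_zero (b + r ^ 2)).hasDerivAt.comp r
      ((hasDerivAt_pow 2 r).const_add b)
    refine ((hasDerivAt_pow p r).mul hg').congr_deriv ?_
    simp only [comp_apply, Nat.cast_ofNat, Nat.add_one_sub_one, pow_succ]
    ring
  have hG1 : ContDiff ℝ 1 G := (contDiff_id.pow p).mul (hg.comp (by fun_prop))
  have hderiv := (hasCompactSupport_pow_mul_comp_const_add_sq hcs b p).integral_Ioi_deriv_eq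
    hG1 0
  have hint₁ := integrable_pow_mul_comp_const_add_sq hg.continuous hcs b (p - 1)
  have hint₂ := integrable_pow_mul_comp_const_add_sq (hg.continuous_deriv le_rfl) hcs.deriv b
    (p + 1)
  have hG0 : G 0 = 0 := by simp [G, hb]
  rw [funext fun r ↦ (hG r).deriv, hG0, neg_zero,
    integral_add (hint₁.const_mul _).integrableOn (hint₂.const_mul _).integrableOn,
    integral_const_mul, integral_const_mul] at hderiv
  exact hderiv

theorem integral_Ioi_odd_pow_mul_iteratedDeriv_comp_const_add_sq {ψ : ℝ → ℝ}
    (hψ : ContDiff ℝ ∞ ψ) (hcs : HasCompactSupport ψ) {b : ℝ} (hb : b ∉ tsupport ψ) :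
    ∀ {k j : ℕ}, k ≤ j →
      ∫ r in Ioi 0, r ^ (2 * k + 1) * iteratedDeriv (j + 1) ψ (b + r ^ 2) = 0
  | 0, j, _ => by
    have := integral_Ioi_pow_mul_comp_const_add_sq ((hψ.iteratedDeriv j).of_le (by simp))
      (hcs.iteratedDeriv j)
      (image_eq_zero_of_notMem_tsupport fun h ↦ hb (tsupport_iteratedDeriv_subset ψ j h)) 0
    rw [iteratedDeriv_succ]
    simpa using this
  | k + 1, j + 1, hkj => by
    have := integral_Ioi_pow_mul_comp_const_add_sq ((hψ.iteratedDeriv (j + 1)).of_le (by simp))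
      (hcs.iteratedDeriv (j + 1))
      (image_eq_zero_of_notMem_tsupport fun h ↦ hb (tsupport_iteratedDeriv_subset ψ _ h))
      (2 * k + 2)
    rw [show 2 * k + 2 - 1 = 2 * k + 1 by omega,
      integral_Ioi_odd_pow_mul_iteratedDeriv_comp_const_add_sq hψ hcs hb
      (Nat.le_of_succ_le_succ hkj)] at this
    rw [iteratedDeriv_succ (n := j + 1), show 2 * (k + 1) + 1 = 2 * k + 2 + 1 by ring]
    simpa using this

section Hyperplane

variable {E : Type*} [NormedAddCommGroup E] [InnerProductSpace ℝ E]

theorem exists_isometry_range_eq_hyperplane {d : ℕ} (hd : Module.finrank ℝ E = d + 1)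
    {θ : E} (hθ : ‖θ‖ = 1) (s : ℝ) :
    ∃ ι : EuclideanSpace ℝ (Fin d) → E, Isometry ι ∧ range ι = {x | ⟪x, θ⟫ = s} ∧
      ∀ y, ‖ι y‖ ^ 2 = s ^ 2 + ‖y‖ ^ 2 := by
  have : Fact (Module.finrank ℝ E = d + 1) := ⟨hd⟩
  let L := (OrthonormalBasis.fromOrthogonalSpanSingleton (𝕜 := ℝ) d
    (norm_ne_zero_iff.1 (hθ ▸ one_ne_zero))).repr
  have horth : ∀ y, ⟪θ, (L.symm y : E)⟫ = 0 := fun y ↦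
    Submodule.mem_orthogonal_singleton_iff_inner_right.1 (L.symm y).2
  refine ⟨fun y ↦ s • θ + L.symm y, ?_, ?_, fun y ↦ ?_⟩
  · refine Isometry.of_dist_eq fun y z ↦ ?_
    rw [dist_add_left, ← Subtype.dist_eq, L.symm.dist_map]
  · ext x
    constructor
    · rintro ⟨y, rfl⟩
      rw [mem_ofPred_eq, real_inner_comm, inner_add_right, real_inner_smul_right,
        real_inner_self_eq_norm_sq, hθ, horth]
      ring
    · intro hx
      have hmem : x - s • θ ∈ (ℝ ∙ θ)ᗮ := by
        rw [Submodule.mem_orthogonal_singleton_iff_inner_right, inner_sub_right,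
          real_inner_smul_right, real_inner_self_eq_norm_sq, hθ, real_inner_comm, hx]
        ring
      exact ⟨L ⟨_, hmem⟩, by simp⟩
  · rw [norm_add_sq_real, real_inner_smul_left, horth, norm_smul, hθ, Submodule.norm_coe,
      L.symm.norm_map, Real.norm_eq_abs, mul_one, sq_abs]
    ring

variable [MeasurableSpace E] [BorelSpace E]
  {F : Type*} [NormedAddCommGroup F] [NormedSpace ℝ F]

theorem setIntegral_hyperplane_comp_norm_sq {d : ℕ} (hd : Module.finrank ℝ E = d + 1)
    {θ : E} (hθ : ‖θ‖ = 1) (s : ℝ) (φ : ℝ → F) :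
    ∫ x in {x | ⟪x, θ⟫ = s}, φ (‖x‖ ^ 2) ∂μH[d] =
      ∫ y : EuclideanSpace ℝ (Fin d), φ (s ^ 2 + ‖y‖ ^ 2) ∂μH[d] := by
  obtain ⟨ι, hι, hrange, hnorm⟩ := exists_isometry_range_eq_hyperplane hd hθ s
  rw [← hrange, ← hι.map_hausdorffMeasure (.inl d.cast_nonneg),
    hι.isClosedEmbedding.measurableEmbedding.integral_map]
  simp_rw [hnorm]

end Hyperplane

theorem integral_iteratedDeriv_comp_const_add_norm_sq_eq_zero {E : Type*}
    [NormedAddCommGroup E] [NormedSpace ℝ E] [MeasurableSpace E] [BorelSpace E] {m : ℕ}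
    (hE : Module.finrank ℝ E = 2 * m + 2) (μ : Measure E) [μ.IsAddHaarMeasure] {ψ : ℝ → ℝ}
    (hψ : ContDiff ℝ ∞ ψ) (hcs : HasCompactSupport ψ) {b : ℝ} (hb : b ∉ tsupport ψ) :
    ∫ y, iteratedDeriv (m + 1) ψ (b + ‖y‖ ^ 2) ∂μ = 0 := by
  have : Nontrivial E := Module.nontrivial_of_finrank_eq_succ hE
  have : FiniteDimensional ℝ E := .of_finrank_eq_succ hE
  rw [integral_fun_norm_addHaar μ fun r ↦ iteratedDeriv (m + 1) ψ (b + r ^ 2), hE,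
    show 2 * m + 2 - 1 = 2 * m + 1 by omega]
  simp_rw [smul_eq_mul]
  rw [integral_Ioi_odd_pow_mul_iteratedDeriv_comp_const_add_sq hψ hcs hb le_rfl, mul_zero,
    smul_zero]

theorem setIntegral_hyperplane_iteratedDeriv_comp_norm_sq_eq_zero {E : Type*}
    [NormedAddCommGroup E] [InnerProductSpace ℝ E] [MeasurableSpace E] [BorelSpace E] {m : ℕ}
    (hE : Module.finrank ℝ E = 2 * m + 3) {θ : E} (hθ : ‖θ‖ = 1) {s : ℝ} {ψ : ℝ → ℝ}
    (hψ : ContDiff ℝ ∞ ψ) (hcs : HasCompactSupport ψ) (hs : s ^ 2 ∉ tsupport ψ) :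
    ∫ x in {x | ⟪x, θ⟫ = s}, iteratedDeriv (m + 1) ψ (‖x‖ ^ 2) ∂μH[(2 * m + 2 : ℕ)] = 0 := by
  rw [setIntegral_hyperplane_comp_norm_sq hE hθ]
  exact integral_iteratedDeriv_comp_const_add_norm_sq_eq_zero (by simp) _ hψ hcs hs

theorem comp_norm_sq_ne_zero {E F : Type*} [NormedAddCommGroup E] [NormedSpace ℝ E]
    [Nontrivial E] [Zero F] {φ : ℝ → F} (hφ : φ ≠ 0) (hφ₀ : support φ ⊆ Ici 0) :
    (fun x : E ↦ φ (‖x‖ ^ 2)) ≠ 0 := by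
  obtain ⟨u, hu⟩ := Function.ne_iff.1 hφ
  obtain ⟨x, hx⟩ := exists_norm_eq E (Real.sqrt_nonneg u)
  refine Function.ne_iff.2 ⟨x, ?_⟩
  rwa [hx, Real.sq_sqrt (hφ₀ hu)]

theorem lack_of_ucp_radon_transform_odd_dim_general
    (n : ℕ) (hn : 3 ≤ n) (hodd : Odd n)
    (U : Set (EuclideanSpace ℝ (Fin n)))
    (hUbd : Bornology.IsBounded U) :
    ∃ f : EuclideanSpace ℝ (Fin n) → ℝ,
      ContDiff ℝ (⊤ : ℕ∞) f ∧ HasCompactSupport f ∧ f ≠ 0 ∧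
      (∀ x ∈ U, f x = 0) ∧
      ∀ (θ : EuclideanSpace ℝ (Fin n)) (s : ℝ), ‖θ‖ = 1 →
        ({x : EuclideanSpace ℝ (Fin n) | ⟪x, θ⟫ = s} ∩ U).Nonempty →
        ∫ x in {x : EuclideanSpace ℝ (Fin n) | ⟪x, θ⟫ = s}, f x ∂ μH[(n : ℝ) - 1] = 0 := by
  obtain ⟨m, hm⟩ : ∃ m, n = 2 * m + 3 := by
    obtain ⟨k, rfl⟩ := hodd
    exact ⟨k - 1, by omega⟩
  have hE : Module.finrank ℝ (EuclideanSpace ℝ (Fin n)) = 2 * m + 3 := by simp [hm]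
  have : Nontrivial (EuclideanSpace ℝ (Fin n)) := Module.nontrivial_of_finrank_eq_succ hE
  obtain ⟨R, hUR⟩ := hUbd.subset_closedBall 0
  have hUR' : ∀ x ∈ U, ‖x‖ ^ 2 ≤ R ^ 2 := fun x hx ↦
    pow_le_pow_left₀ (norm_nonneg x) (by simpa using hUR hx) 2
  obtain ⟨ψ, hψR, hψcs, hψ, -, hψ1⟩ :=
    exists_contDiff_tsupport_subset (n := ⊤) (Ioi_mem_nhds (lt_add_one (R ^ 2)))
  have hψ_zero : ∀ u ≤ R ^ 2, u ∉ tsupport ψ := fun u hu h ↦ (hψR h).not_ge hu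
  refine ⟨fun x ↦ iteratedDeriv (m + 1) ψ (‖x‖ ^ 2), (hψ.iteratedDeriv _).comp (contDiff_norm_sq ℝ),
    (hψcs.iteratedDeriv _).comp_isProperMap isProperMap_norm_sq, ?_, ?_, ?_⟩
  · refine comp_norm_sq_ne_zero (iteratedDeriv_ne_zero_of_hasCompactSupport hψcs hψ ?_ _) ?_
    · exact Function.ne_iff.2 ⟨R ^ 2 + 1, by simp [hψ1]⟩
    · intro u hu
      exact (sq_nonneg R).trans
        (hψR (tsupport_iteratedDeriv_subset ψ _ (subset_tsupport _ hu))).le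
  · intro x hx
    refine image_eq_zero_of_notMem_tsupport fun h ↦ ?_
    exact hψ_zero _ (hUR' x hx) (tsupport_iteratedDeriv_subset ψ _ h)
  · rintro θ s hθ ⟨x, hxs, hxU⟩
    have hs : s ^ 2 ≤ ‖x‖ ^ 2 := by
      rw [← hxs, ← sq_abs]
      exact pow_le_pow_left₀ (abs_nonneg _)
        ((abs_real_inner_le_norm x θ).trans_eq (by simp [hθ])) 2
    rw [show (n : ℝ) - 1 = (2 * m + 2 : ℕ) by rw [hm]; push_cast; ring]
    exact setIntegral_hyperplane_iteratedDeriv_comp_norm_sq_eq_zero hE hθ hψ hψcs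
      (hψ_zero _ (hs.trans (hUR' x hxU)))

/-- **Lack of UCP for the Radon transform in odd dimensions.**
If `n ≥ 3` is odd and `U ⊆ ℝⁿ` is a nonempty bounded open set, then there is a nonzero
compactly supported smooth function `f` vanishing on `U` whose integral over every hyperplane
`{x : ⟪x, θ⟫ = s}` meeting `U` (w.r.t. `(n-1)`-dimensional Hausdorff measure) is `0`. -/
theorem lack_of_ucp_radon_transform_odd_dim
    (n : ℕ) (hn : 3 ≤ n) (hodd : Odd n)
    (U : Set (EuclideanSpace ℝ (Fin n))) (hUne : U.Nonempty)
    (hUbd : Bornology.IsBounded U) (hUopen : IsOpen U) :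
    ∃ f : EuclideanSpace ℝ (Fin n) → ℝ,
      ContDiff ℝ (⊤ : ℕ∞) f ∧ HasCompactSupport f ∧ f ≠ 0 ∧
      (∀ x ∈ U, f x = 0) ∧
      ∀ (θ : EuclideanSpace ℝ (Fin n)) (s : ℝ), ‖θ‖ = 1 →
        ({x : EuclideanSpace ℝ (Fin n) | ⟪x, θ⟫ = s} ∩ U).Nonempty →
        ∫ x in {x : EuclideanSpace ℝ (Fin n) | ⟪x, θ⟫ = s}, f x ∂ μH[(n : ℝ) - 1] = 0 :=
  lack_of_ucp_radon_transform_odd_dim_general n hn hodd U hUbd
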